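/- arXiv:2202.09570 — 2 statements merged into one kernel-verified Lean document; each statement's English description precedes it below -/
import Mathlib

section
/- Let P, Q : ℝ → ℝ be polynomials of degree n with positive leading coefficients having a common real root r_0, and write P(r) = (r − r_0)·P̃(r), Q(r) = (r − r_0)·Q̃(r). Then the resultant of P and Q is zero, and the (2n−2)×(2n−2) leading principal minors of the Sylvester-type matrix of (P, Q) equal the corresponding leading principal minors of the Sylvester-type matrix of (P̃, Q̃). -/
/-!
Row `i` of the Sylvester-type matrix of `(P, Q)` is the coefficient vector of `X ^ (i / 2)` times
the reversed polynomial `reflect n P` (or `reflect n Q`), and `P = (X - r₀) P̃` turns into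
`reflect n P = (1 - r₀ X) · reflect (n - 1) P̃`. Dividing a polynomial by `1 - r₀ X` acts on its
coefficient vector as right multiplication by the unipotent upper triangular matrix
`(r₀ ^ (j - l))_{l ≤ j}`, so this matrix carries the leading blocks of the matrix of `(P, Q)` to
those of `(P̃, Q̃)` without changing determinants. On the full `2n × 2n` matrix the image has a
zero last column, since the rows built from `P̃, Q̃` have degree at most `2n - 2`.
-/

open Polynomial Matrix

/-- The 2n×2n interleaved (Routh–Hurwitz style) Sylvester-type matrix of two
coefficient sequences `a b : ℕ → ℝ` given in descending order
(a j is the coefficient of r^{n-j}). Rows 2k carry `a`, rows 2k+1 carry `b`,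
each pair shifted by k. -/
def RHmat (n : ℕ) (a b : ℕ → ℝ) : Matrix (Fin (2 * n)) (Fin (2 * n)) ℝ :=
  Matrix.of fun i j =>
    if i.val / 2 ≤ j.val ∧ j.val ≤ i.val / 2 + n then
      (if i.val % 2 = 0 then a (j.val - i.val / 2) else b (j.val - i.val / 2))
    else 0

/-- The 2k-th order leading principal minor (entries outside the matrix read as 0). -/
def leadMinor {N : ℕ} (M : Matrix (Fin N) (Fin N) ℝ) (k : ℕ) : ℝ :=
  Matrix.det (Matrix.of fun i j : Fin k =>
    if h : i.val < N ∧ j.val < N then M ⟨i.val, h.1⟩ ⟨j.val, h.2⟩ else 0)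

namespace Polynomial

variable {R : Type*} [CommRing R]

theorem coeff_eq_sum_of_eq_one_sub_C_mul_X_mul {f g : R[X]} {a : R}
    (h : f = (1 - C a * X) * g) (j : ℕ) :
    g.coeff j = ∑ l ∈ Finset.range (j + 1), f.coeff l * a ^ (j - l) := by
  have hf : ∀ l, f.coeff (l + 1) = g.coeff (l + 1) - a * g.coeff l := fun l => by
    simp [h, sub_mul, mul_assoc, coeff_C_mul, coeff_X_mul]
  induction j with
  | zero => simp [h, sub_mul, mul_assoc, coeff_C_mul]
  | succ j ih =>
    rw [Finset.sum_range_succ, Nat.sub_self, pow_zero, mul_one, hf]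
    have hshift : ∀ l ∈ Finset.range (j + 1),
        f.coeff l * a ^ (j + 1 - l) = a * (f.coeff l * a ^ (j - l)) := fun l hl => by
      rw [Nat.sub_add_comm (Finset.mem_range_succ_iff.mp hl), pow_succ]; ring
    rw [Finset.sum_congr rfl hshift, ← Finset.mul_sum, ← ih]
    ring

theorem coeff_X_pow_mul_reflect {p : R[X]} {n : ℕ} (hp : p.natDegree ≤ n) (s j : ℕ) :
    (X ^ s * reflect n p).coeff j = if s ≤ j ∧ j ≤ s + n then p.coeff (n - (j - s)) else 0 := by
  rw [coeff_X_pow_mul', coeff_reflect]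
  by_cases hs : s ≤ j
  · by_cases hj : j ≤ s + n
    · simp [hs, hj, revAt_le (show j - s ≤ n by omega)]
    · simp [hs, hj, revAt_eq_self_of_lt (show n < j - s by omega),
        coeff_eq_zero_of_natDegree_lt (show p.natDegree < j - s by omega)]
  · simp [hs]

theorem reflect_X_sub_C_mul {p : R[X]} {n : ℕ} (hn : 1 ≤ n) (hp : p.natDegree ≤ n - 1) (a : R) :
    reflect n ((X - C a) * p) = (1 - C a * X) * reflect (n - 1) p := by
  obtain ⟨m, rfl⟩ : ∃ m, n = 1 + m := ⟨n - 1, by omega⟩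
  rw [reflect_mul _ _ (natDegree_X_sub_C_le a) (by omega), reflect_sub, reflect_C,
    ← pow_one (X : R[X]), reflect_monomial]
  simp [revAt_le]

theorem natDegree_le_of_eq_X_sub_C_mul [Nontrivial R] {p q : R[X]} {a : R}
    (h : p = (X - C a) * q) : q.natDegree ≤ p.natDegree - 1 := by
  rcases eq_or_ne q 0 with rfl | hq
  · simp
  · rw [h, (monic_X_sub_C a).natDegree_mul' hq, natDegree_X_sub_C]
    omega

end Polynomial

section CoeffMatrix

variable {R : Type*} [CommRing R]

def coeffMatrix (m : ℕ) (p : ℕ → R[X]) : Matrix (Fin m) (Fin m) R :=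
  Matrix.of fun i j => (p i).coeff j

def geomMatrix (m : ℕ) (a : R) : Matrix (Fin m) (Fin m) R :=
  Matrix.of fun l j => if l.val ≤ j.val then a ^ (j.val - l.val) else 0

theorem det_geomMatrix (m : ℕ) (a : R) : (geomMatrix m a).det = 1 := by
  rw [Matrix.det_of_isUpperTriangular]
  · simp [geomMatrix]
  · intro i j hij
    simp only [geomMatrix, Matrix.of_apply]
    rw [if_neg (by simpa using hij)]

theorem coeffMatrix_mul_geomMatrix {m : ℕ} {p q : ℕ → R[X]} {a : R}
    (h : ∀ i, p i = (1 - C a * X) * q i) :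
    coeffMatrix m p * geomMatrix m a = coeffMatrix m q := by
  ext i j
  simp only [Matrix.mul_apply, coeffMatrix, geomMatrix, Matrix.of_apply, mul_ite, mul_zero]
  rw [coeff_eq_sum_of_eq_one_sub_C_mul_X_mul (h i),
    Fin.sum_univ_eq_sum_range (fun l => if l ≤ j.val then (p i).coeff l * a ^ (j.val - l) else 0),
    ← Finset.sum_subset (Finset.range_subset_range.mpr j.isLt) ?_]
  · exact Finset.sum_congr rfl fun l hl => if_pos (Finset.mem_range_succ_iff.mp hl)
  · intro l _ hl
    rw [if_neg (by simpa using hl)]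

theorem det_coeffMatrix_eq_of_eq_one_sub_C_mul_X_mul {m : ℕ} {p q : ℕ → R[X]} {a : R}
    (h : ∀ i, p i = (1 - C a * X) * q i) :
    (coeffMatrix m p).det = (coeffMatrix m q).det := by
  rw [← coeffMatrix_mul_geomMatrix h, Matrix.det_mul, det_geomMatrix, mul_one]

theorem det_coeffMatrix_eq_zero_of_natDegree_lt {m : ℕ} {p : ℕ → R[X]} (j : Fin m)
    (h : ∀ i : Fin m, (p i).natDegree < j) : (coeffMatrix m p).det = 0 :=
  Matrix.det_eq_zero_of_column_eq_zero j fun i => coeff_eq_zero_of_natDegree_lt (h i)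

noncomputable def sylvesterRow (n : ℕ) (p q : R[X]) (i : ℕ) : R[X] :=
  X ^ (i / 2) * reflect n (if i % 2 = 0 then p else q)

theorem natDegree_sylvesterRow_le {n : ℕ} {p q : R[X]} (hp : p.natDegree ≤ n)
    (hq : q.natDegree ≤ n) (i : ℕ) : (sylvesterRow n p q i).natDegree ≤ i / 2 + n := by
  refine natDegree_mul_le.trans
    (add_le_add (natDegree_X_pow_le _) (natDegree_reflect_le.trans ?_))
  split_ifs <;> simp [hp, hq]

end CoeffMatrix

theorem leadMinor_coeffMatrix {N k : ℕ} (hk : k ≤ N) (p : ℕ → ℝ[X]) :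
    leadMinor (coeffMatrix N p) k = (coeffMatrix k p).det := by
  unfold leadMinor
  congr 1
  ext i j
  simp [coeffMatrix, show i.val < N by omega, show j.val < N by omega]

theorem RHmat_eq_coeffMatrix {n : ℕ} {p q : ℝ[X]} (hp : p.natDegree ≤ n) (hq : q.natDegree ≤ n) :
    RHmat n (fun j => p.coeff (n - j)) (fun j => q.coeff (n - j)) =
      coeffMatrix (2 * n) (sylvesterRow n p q) := by
  ext i j
  by_cases hi : i.val % 2 = 0 <;>
    simp [RHmat, coeffMatrix, sylvesterRow, hi, coeff_X_pow_mul_reflect hp,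
      coeff_X_pow_mul_reflect hq]

theorem stmt6_general (n : ℕ) (hn : 1 ≤ n) (P Q Pt Qt : Polynomial ℝ) (r₀ : ℝ)
    (hPdeg : P.natDegree = n) (hQdeg : Q.natDegree = n)
    (hP : P = (Polynomial.X - Polynomial.C r₀) * Pt)
    (hQ : Q = (Polynomial.X - Polynomial.C r₀) * Qt) :
    (RHmat n (fun j => P.coeff (n - j)) (fun j => Q.coeff (n - j))).det = 0 ∧
    ∀ k : ℕ, k ≤ n - 1 →
      leadMinor (RHmat n (fun j => P.coeff (n - j)) (fun j => Q.coeff (n - j))) (2 * k) =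
        leadMinor (RHmat (n - 1) (fun j => Pt.coeff (n - 1 - j))
          (fun j => Qt.coeff (n - 1 - j))) (2 * k) := by
  have hPt : Pt.natDegree ≤ n - 1 := hPdeg ▸ natDegree_le_of_eq_X_sub_C_mul hP
  have hQt : Qt.natDegree ≤ n - 1 := hQdeg ▸ natDegree_le_of_eq_X_sub_C_mul hQ
  have hrows : ∀ i, sylvesterRow n P Q i = (1 - C r₀ * X) * sylvesterRow (n - 1) Pt Qt i := by
    intro i
    rw [sylvesterRow, sylvesterRow, mul_left_comm]
    split_ifs
    · rw [hP, reflect_X_sub_C_mul hn hPt]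
    · rw [hQ, reflect_X_sub_C_mul hn hQt]
  rw [RHmat_eq_coeffMatrix hPdeg.le hQdeg.le, RHmat_eq_coeffMatrix hPt hQt]
  refine ⟨?_, fun k hk => ?_⟩
  · rw [det_coeffMatrix_eq_of_eq_one_sub_C_mul_X_mul hrows]
    refine det_coeffMatrix_eq_zero_of_natDegree_lt ⟨2 * n - 1, by omega⟩ fun i =>
      (natDegree_sylvesterRow_le hPt hQt i).trans_lt ?_
    have := i.isLt
    dsimp only
    omega
  · rw [leadMinor_coeffMatrix (by omega), leadMinor_coeffMatrix (by omega),
      det_coeffMatrix_eq_of_eq_one_sub_C_mul_X_mul hrows]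

/-- If P, Q are real polynomials of degree n with positive leading
coefficients sharing a real root r₀, with P = (X − r₀)·P̃, Q = (X − r₀)·Q̃, then the
resultant (det of the interleaved 2n×2n Sylvester-type matrix) vanishes, and for each
k ≤ n−1 the 2k-th leading principal minor of the Sylvester-type matrix of (P, Q)
equals that of the Sylvester-type matrix of (P̃, Q̃). -/
theorem stmt6 (n : ℕ) (hn : 1 ≤ n) (P Q Pt Qt : Polynomial ℝ) (r₀ : ℝ)
    (hPdeg : P.natDegree = n) (hQdeg : Q.natDegree = n)
    (hPlead : 0 < P.leadingCoeff) (hQlead : 0 < Q.leadingCoeff)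
    (hProot : P.eval r₀ = 0) (hQroot : Q.eval r₀ = 0)
    (hP : P = (Polynomial.X - Polynomial.C r₀) * Pt)
    (hQ : Q = (Polynomial.X - Polynomial.C r₀) * Qt) :
    (RHmat n (fun j => P.coeff (n - j)) (fun j => Q.coeff (n - j))).det = 0 ∧
    ∀ k : ℕ, k ≤ n - 1 →
      leadMinor (RHmat n (fun j => P.coeff (n - j)) (fun j => Q.coeff (n - j))) (2 * k) =
        leadMinor (RHmat (n - 1) (fun j => Pt.coeff (n - 1 - j))
          (fun j => Qt.coeff (n - 1 - j))) (2 * k) :=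
  stmt6_general n hn P Q Pt Qt r₀ hPdeg hQdeg hP hQ
end

section
/- Suppose two real polynomials P and Q of degree n have resultant zero, the (2n−2)-order leading principal minor ∇_{n−1} of their interleaved Sylvester matrix is nonzero, and r_0 is their unique common root. Then ∇_{n−1}·r_0 + ∇̃ = 0, where ∇̃ is the determinant of the (2n−2)×(2n−2) matrix formed from the first 2n−2 rows, the first 2n−3 columns, and the (2n−1)-th column of the Sylvester matrix. Consequently r_0 = −∇̃/∇_{n−1}. -/
/-!
Row `2q` (resp. `2q + 1`) of the Sylvester matrix carries the coefficients of `P` (resp. `Q`) in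
columns `q, …, q + n`, so pairing it with `(r₀ ^ (m - j))_j` for `m ≥ q + n` gives
`r₀ ^ (m - q - n) * P(r₀)` (resp. `Q(r₀)`), which vanishes at the common root. For the first
`2n - 2` rows `m = 2n - 2` works, so the top-left block `A`, whose determinant is `∇ₙ₋₁`, sends
`-(r₀ ^ (2n - 2 - j))_j` to column `2n - 2` (0-indexed). Cramer's rule reads off the entry `-r₀`
at `j = 2n - 3` as `∇̃ / ∇ₙ₋₁`.
-/

open Polynomial Matrix

/-- The determinant ∇̃ of the (2n−2)×(2n−2) matrix formed from the first 2n−2 rows,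
the first 2n−3 columns and the (2n−1)-th column of the 2n×2n matrix M. -/
def tildeNabla (n : ℕ) (M : Matrix (Fin (2 * n)) (Fin (2 * n)) ℝ) : ℝ :=
  Matrix.det (Matrix.of fun i j : Fin (2 * n - 2) =>
    (fun i' j' : ℕ =>
        if h : i' < 2 * n ∧ j' < 2 * n then M ⟨i', h.1⟩ ⟨j', h.2⟩ else 0)
      i.val (if j.val = 2 * n - 3 then 2 * n - 2 else j.val))

open Finset

theorem Matrix.cramer_mulVec {n R : Type*} [Fintype n] [DecidableEq n] [CommRing R]
    (A : Matrix n n R) (x : n → R) : A.cramer (A *ᵥ x) = A.det • x := by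
  rw [cramer_eq_adjugate_mulVec, mulVec_mulVec, adjugate_mul, smul_mulVec, one_mulVec]

theorem Matrix.det_updateCol_mulVec {n R : Type*} [Fintype n] [DecidableEq n] [CommRing R]
    (A : Matrix n n R) (x : n → R) (i : n) : (A.updateCol i (A *ᵥ x)).det = A.det * x i := by
  rw [← cramer_apply, cramer_mulVec, Pi.smul_apply, smul_eq_mul]

section CommSemiring

variable {R : Type*} [CommSemiring R]

def shiftedCoeffRow (c : ℕ → R) (n q : ℕ) (j : ℕ) : R :=
  if q ≤ j ∧ j ≤ q + n then c (j - q) else 0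

theorem sum_shiftedCoeffRow_mul_pow (c : ℕ → R) {n q m : ℕ} (h : q + n ≤ m) (r : R) :
    ∑ j ∈ range (m + 1), shiftedCoeffRow c n q j * r ^ (m - j) =
      r ^ (m - (q + n)) * ∑ l ∈ range (n + 1), c l * r ^ (n - l) := by
  have hsupp : ∑ j ∈ range (m + 1), shiftedCoeffRow c n q j * r ^ (m - j) =
      ∑ j ∈ Ico q (q + (n + 1)), shiftedCoeffRow c n q j * r ^ (m - j) := by
    refine (sum_subset (fun j hj => ?_) fun j _ hj => ?_).symm
    · simp only [mem_Ico, mem_range] at hj ⊢; omega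
    · simp only [mem_Ico, not_and_or, not_le, not_lt] at hj
      rw [shiftedCoeffRow, if_neg (by omega), zero_mul]
  rw [hsupp, sum_Ico_eq_sum_range, Nat.add_sub_cancel_left, mul_sum]
  refine sum_congr rfl fun l hl => ?_
  rw [mem_range] at hl
  rw [shiftedCoeffRow, if_pos (by omega), Nat.add_sub_cancel_left,
    show m - (q + l) = (m - (q + n)) + (n - l) by omega, pow_add]
  ring

theorem Polynomial.sum_range_coeff_sub_mul_pow_sub {P : R[X]} {n : ℕ} (hP : P.natDegree ≤ n)
    (r : R) :
    ∑ l ∈ range (n + 1), P.coeff (n - l) * r ^ (n - l) = P.eval r := by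
  rw [eval_eq_sum_range' (Nat.lt_succ_of_le hP)]
  exact sum_range_reflect (fun l => P.coeff l * r ^ l) (n + 1)

end CommSemiring

theorem RHmat_apply (n : ℕ) (a b : ℕ → ℝ) (i j : Fin (2 * n)) :
    RHmat n a b i j = shiftedCoeffRow (if i.val % 2 = 0 then a else b) n (i / 2) j := by
  rw [RHmat, of_apply, shiftedCoeffRow]
  split_ifs <;> rfl

theorem leadMinor_eq_det_submatrix {N k : ℕ} (M : Matrix (Fin N) (Fin N) ℝ) (hk : k ≤ N) :
    leadMinor M k = (M.submatrix (Fin.castLE hk) (Fin.castLE hk)).det := by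
  unfold leadMinor
  congr 1
  ext i j
  rw [of_apply, dif_pos ⟨i.2.trans_le hk, j.2.trans_le hk⟩]
  rfl

theorem tildeNabla_eq_det_updateCol {n : ℕ} (hn : 2 ≤ n)
    (M : Matrix (Fin (2 * n)) (Fin (2 * n)) ℝ) :
    tildeNabla n M =
      ((M.submatrix (Fin.castLE (Nat.sub_le _ 2)) (Fin.castLE (Nat.sub_le _ 2))).updateCol
        ⟨2 * n - 3, by omega⟩
        fun i => M (Fin.castLE (Nat.sub_le _ 2) i) ⟨2 * n - 2, by omega⟩).det := by
  unfold tildeNabla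
  congr 1
  ext i j
  rw [of_apply, updateCol_apply]
  dsimp only
  by_cases hj : j.val = 2 * n - 3
  · rw [if_pos hj, if_pos (Fin.ext hj), dif_pos ⟨by omega, by omega⟩]
    rfl
  · rw [if_neg hj, if_neg (fun h => hj (congrArg Fin.val h)), dif_pos ⟨by omega, by omega⟩]
    rfl

theorem RHmat_submatrix_mulVec_add {n : ℕ} (hn : 2 ≤ n) (a b : ℕ → ℝ) (r : ℝ)
    (i : Fin (2 * n - 2)) :
    ((RHmat n a b).submatrix (Fin.castLE (Nat.sub_le _ 2)) (Fin.castLE (Nat.sub_le _ 2)) *ᵥ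
        fun j => r ^ (2 * n - 2 - j)) i +
      RHmat n a b (Fin.castLE (Nat.sub_le _ 2) i) ⟨2 * n - 2, by omega⟩ =
      r ^ (2 * n - 2 - (i / 2 + n)) *
        ∑ l ∈ range (n + 1), (if i.val % 2 = 0 then a else b) l * r ^ (n - l) := by
  rw [← sum_shiftedCoeffRow_mul_pow _ (by omega)]
  simp only [mulVec, dotProduct, submatrix_apply, RHmat_apply, Fin.val_castLE]
  rw [Fin.sum_univ_eq_sum_range (fun j => shiftedCoeffRow _ n (i / 2) j * r ^ (2 * n - 2 - j)),
    sum_range_succ, Nat.sub_self, pow_zero, mul_one]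

theorem stmt12_general (n : ℕ) (hn : 2 ≤ n) (P Q : Polynomial ℝ)
    (hPdeg : P.natDegree = n) (hQdeg : Q.natDegree = n) (r₀ : ℝ)
    (H : Matrix (Fin (2 * n)) (Fin (2 * n)) ℝ)
    (hH : H = RHmat n (fun j => P.coeff (n - j)) (fun j => Q.coeff (n - j)))
    (hminor : leadMinor H (2 * (n - 1)) ≠ 0)
    (hroot : P.eval r₀ = 0 ∧ Q.eval r₀ = 0) :
    leadMinor H (2 * (n - 1)) * r₀ + tildeNabla n H = 0 ∧
      r₀ = -(tildeNabla n H / leadMinor H (2 * (n - 1))) := by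
  set A := H.submatrix (Fin.castLE (Nat.sub_le (2 * n) 2)) (Fin.castLE (Nat.sub_le (2 * n) 2))
  set w : Fin (2 * n - 2) → ℝ := fun j => r₀ ^ (2 * n - 2 - j)
  have hlead : leadMinor H (2 * (n - 1)) = A.det := by
    rw [show 2 * (n - 1) = 2 * n - 2 by omega, leadMinor_eq_det_submatrix]
  have hkernel :
      A *ᵥ (-w) = fun i => H (Fin.castLE (Nat.sub_le _ 2) i) ⟨2 * n - 2, by omega⟩ := by
    ext i
    have hrow := RHmat_submatrix_mulVec_add hn (fun j => P.coeff (n - j))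
      (fun j => Q.coeff (n - j)) r₀ i
    rw [apply_ite (fun c : ℕ → ℝ => ∑ l ∈ range (n + 1), c l * r₀ ^ (n - l)),
      sum_range_coeff_sub_mul_pow_sub hPdeg.le, sum_range_coeff_sub_mul_pow_sub hQdeg.le,
      hroot.1, hroot.2, ite_self, mul_zero, ← hH] at hrow
    rw [mulVec_neg, Pi.neg_apply, neg_eq_iff_add_eq_zero]
    exact hrow
  have hcramer : tildeNabla n H = -(A.det * r₀) := by
    rw [tildeNabla_eq_det_updateCol hn, ← hkernel, det_updateCol_mulVec]
    change A.det * -r₀ ^ (2 * n - 2 - (2 * n - 3)) = _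
    rw [show 2 * n - 2 - (2 * n - 3) = 1 by omega, pow_one, mul_neg]
  rw [hlead] at hminor ⊢
  rw [hcramer]
  exact ⟨by ring, by field_simp⟩

/-- If P, Q (real, degree n) have vanishing resultant, nonzero minor
∇ₙ₋₁, and r₀ is their unique common root, then ∇ₙ₋₁·r₀ + ∇̃ = 0,
i.e. r₀ = −∇̃/∇ₙ₋₁. -/
theorem stmt12 (n : ℕ) (hn : 2 ≤ n) (P Q : Polynomial ℝ)
    (hPdeg : P.natDegree = n) (hQdeg : Q.natDegree = n) (r₀ : ℝ)
    (H : Matrix (Fin (2 * n)) (Fin (2 * n)) ℝ)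
    (hH : H = RHmat n (fun j => P.coeff (n - j)) (fun j => Q.coeff (n - j)))
    (hres : H.det = 0) (hminor : leadMinor H (2 * (n - 1)) ≠ 0)
    (hroot : P.eval r₀ = 0 ∧ Q.eval r₀ = 0)
    (huniq : ∀ z : ℂ, Polynomial.aeval z P = 0 → Polynomial.aeval z Q = 0 → z = (r₀ : ℂ)) :
    leadMinor H (2 * (n - 1)) * r₀ + tildeNabla n H = 0 ∧
      r₀ = -(tildeNabla n H / leadMinor H (2 * (n - 1))) :=
  stmt12_general n hn P Q hPdeg hQdeg r₀ H hH hminor hroot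
end
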